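/- arXiv:2403.00737 — 4 statements merged into one kernel-verified Lean document; each statement's English description precedes it below -/
import Mathlib

section
/- Let p₁, …, pₙ be distinct points of ℝ² in general position such that p₁ is an extreme point of the convex hull of {p₁, …, pₙ} and p₂, …, pₙ appear in counterclockwise angular order around p₁, i.e., for all indices 2 ≤ a < b ≤ n the triple (p₁, p_a, p_b) is positively oriented. Then there exist points p̃₁, …, p̃ₙ in ℝ² whose x-coordinates are strictly increasing (the x-coordinate of p̃ᵢ is strictly less than that of p̃ⱼ whenever i < j) such that for all 1 ≤ a < b < c ≤ n the triple (p̃_a, p̃_b, p̃_c) is positively oriented if and only if (p_a, p_b, p_c) is positively oriented. -/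
/-- Orientation determinant of three points in the plane:
`det [[1,1,1],[pₓ,qₓ,rₓ],[p_y,q_y,r_y]]`.
The triple `(p,q,r)` is positively oriented iff `det3 p q r > 0`,
and negatively oriented iff `det3 p q r < 0`. -/
noncomputable def det3 (p q r : ℝ × ℝ) : ℝ :=
  Matrix.det !![(1:ℝ), 1, 1; p.1, q.1, r.1; p.2, q.2, r.2]

/-- A set of points in the plane is in general position if no three
distinct points of it are collinear. -/
def InGenPos (S : Set (ℝ × ℝ)) : Prop :=
  ∀ p ∈ S, ∀ q ∈ S, ∀ r ∈ S, p ≠ q → p ≠ r → q ≠ r →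
    ¬ Collinear ℝ ({p, q, r} : Set (ℝ × ℝ))

/-- `P` is a `k`-gon of `S`: a `k`-element subset of `S` in convex position,
i.e. every point of `P` is an extreme point of the convex hull of `P`. -/
def IsGon (k : ℕ) (S P : Set (ℝ × ℝ)) : Prop :=
  P ⊆ S ∧ P.Finite ∧ P.ncard = k ∧
    ∀ p ∈ P, p ∈ Set.extremePoints ℝ (convexHull ℝ P)

/-- `P` is a `k`-hole of `S`: a `k`-gon of `S` whose convex hull contains
no point of `S` other than the `k` points of `P`. -/
def IsHole (k : ℕ) (S P : Set (ℝ × ℝ)) : Prop :=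
  IsGon k S P ∧ ∀ q ∈ S, q ∈ convexHull ℝ P → q ∈ P

/-! A projective transformation sending `p 1` to the vertical point at infinity, and the line
through `p 1` parallel to `p 2 p n` to the line at infinity, keeps the remaining points on one
side of that line and therefore preserves their orientations; it turns the lines through `p 1`
into vertical lines, so the counterclockwise order around `p 1` becomes the left-to-right order.
A finite point placed high enough, to the left of all others, then plays the role of `p 1`. -/

open Filter

lemma det3_eq (p q r : ℝ × ℝ) :
    det3 p q r = (q.1 - p.1) * (r.2 - p.2) - (q.2 - p.2) * (r.1 - p.1) := by
  simp only [det3, Matrix.det_fin_three, Matrix.of_apply, Matrix.cons_val', Matrix.cons_val_zero,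
    Matrix.cons_val_one, Matrix.cons_val, Matrix.cons_val_fin_one]
  ring

lemma det3_self_right (p q : ℝ × ℝ) : det3 p q q = 0 := by
  rw [det3_eq]; ring

lemma eventually_det3_pos {q r : ℝ × ℝ} (h : q.1 < r.1) (x : ℝ) :
    ∀ᶠ y in atTop, 0 < det3 (x, y) q r := by
  have hlin : Tendsto (fun y => y * (r.1 - q.1) + ((q.1 - x) * r.2 - q.2 * (r.1 - x)))
      atTop atTop :=
    tendsto_atTop_add_const_right _ _ (tendsto_id.atTop_mul_const (sub_pos.2 h))
  filter_upwards [hlin.eventually_gt_atTop 0] with y hy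
  rw [det3_eq]; linarith

section ProjectiveChart

variable (o w : ℝ × ℝ)

def depth (v : ℝ × ℝ) : ℝ := w.1 * (v.1 - o.1) + w.2 * (v.2 - o.2)

/-- Sends the line `depth o w = 0` to infinity and `o` to the vertical point at infinity. -/
noncomputable def projChart (v : ℝ × ℝ) : ℝ × ℝ :=
  ((w.1 * (v.2 - o.2) - w.2 * (v.1 - o.1)) / depth o w v, 1 / depth o w v)

variable {o w}

lemma normSq_pos_of_depth_pos {v : ℝ × ℝ} (h : 0 < depth o w v) : 0 < w.1 ^ 2 + w.2 ^ 2 := by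
  by_contra! hw
  have h1 : w.1 = 0 := by nlinarith
  have h2 : w.2 = 0 := by nlinarith
  simp [depth, h1, h2] at h

lemma det3_projChart {a b c : ℝ × ℝ} (ha : depth o w a ≠ 0) (hb : depth o w b ≠ 0)
    (hc : depth o w c ≠ 0) :
    det3 (projChart o w a) (projChart o w b) (projChart o w c) =
      (w.1 ^ 2 + w.2 ^ 2) * det3 a b c / (depth o w a * depth o w b * depth o w c) := by
  simp only [projChart, det3_eq]
  field_simp
  simp only [depth]
  ring

lemma projChart_fst_lt_iff {a b : ℝ × ℝ} (ha : 0 < depth o w a) (hb : 0 < depth o w b) :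
    (projChart o w a).1 < (projChart o w b).1 ↔ 0 < det3 o a b := by
  have hcross : (w.1 * (b.2 - o.2) - w.2 * (b.1 - o.1)) * depth o w a -
      (w.1 * (a.2 - o.2) - w.2 * (a.1 - o.1)) * depth o w b =
      (w.1 ^ 2 + w.2 ^ 2) * det3 o a b := by
    simp only [depth, det3_eq]; ring
  simp only [projChart]
  rw [div_lt_div_iff₀ ha hb, ← sub_pos, hcross,
    mul_pos_iff_of_pos_left (normSq_pos_of_depth_pos ha)]

lemma det3_projChart_pos_iff {a b c : ℝ × ℝ} (ha : 0 < depth o w a) (hb : 0 < depth o w b)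
    (hc : 0 < depth o w c) :
    0 < det3 (projChart o w a) (projChart o w b) (projChart o w c) ↔ 0 < det3 a b c := by
  rw [det3_projChart ha.ne' hb.ne' hc.ne', div_pos_iff_of_pos_right (by positivity),
    mul_pos_iff_of_pos_left (normSq_pos_of_depth_pos ha)]

end ProjectiveChart

lemma depth_normal (o q r v : ℝ × ℝ) :
    depth o (r.2 - q.2, q.1 - r.1) v = det3 o q v + det3 o v r := by
  simp only [depth, det3_eq]; ring

lemma depth_normal_pos_of_ccw {p : ℕ → ℝ × ℝ} {n : ℕ} (hn : 2 < n)
    (hccw : ∀ a b : ℕ, 2 ≤ a → a < b → b ≤ n → det3 (p 1) (p a) (p b) > 0)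
    (i : ℕ) (h2i : 2 ≤ i) (hin : i ≤ n) :
    0 < depth (p 1) ((p n).2 - (p 2).2, (p 2).1 - (p n).1) (p i) := by
  rw [depth_normal]
  rcases h2i.eq_or_lt with rfl | h2i'
  · rw [det3_self_right, zero_add]; exact hccw 2 n le_rfl hn le_rfl
  rcases hin.eq_or_lt with rfl | hin'
  · rw [det3_self_right, add_zero]; exact hccw 2 i le_rfl h2i' le_rfl
  exact add_pos (hccw 2 i le_rfl h2i' hin) (hccw i n h2i hin' le_rfl)

theorem exists_x_sorted_realization_general (n : ℕ) (p : ℕ → ℝ × ℝ)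
    (hccw : ∀ a b : ℕ, 2 ≤ a → a < b → b ≤ n → det3 (p 1) (p a) (p b) > 0) :
    ∃ q : ℕ → ℝ × ℝ,
      (∀ i j : ℕ, 1 ≤ i → i < j → j ≤ n → (q i).1 < (q j).1) ∧
      (∀ a b c : ℕ, 1 ≤ a → a < b → b < c → c ≤ n →
        (det3 (q a) (q b) (q c) > 0 ↔ det3 (p a) (p b) (p c) > 0)) := by
  rcases le_or_gt n 2 with hn | hn
  · exact ⟨fun i => (i, 0), fun i j _ hij _ => by simpa using hij,
      fun _ _ _ _ _ _ _ => by omega⟩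
  set φ := projChart (p 1) ((p n).2 - (p 2).2, (p 2).1 - (p n).1)
  have hdepth := depth_normal_pos_of_ccw hn hccw
  have hsorted : ∀ i j, 2 ≤ i → i < j → j ≤ n → (φ (p i)).1 < (φ (p j)).1 :=
    fun i j hi hij hj => (projChart_fst_lt_iff (hdepth _ hi (by omega)) (hdepth _ (by omega) hj)).2
      (hccw i j hi hij hj)
  obtain ⟨x, hx⟩ : ∃ x, ∀ j ∈ Finset.Icc 2 n, x < (φ (p j)).1 :=
    ((eventually_all_finset _).2 fun j _ => eventually_lt_atBot _).exists
  obtain ⟨y, hy⟩ : ∃ y, ∀ i ∈ Finset.Icc 2 n, ∀ j ∈ Finset.Icc 2 n, i < j →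
      0 < det3 (x, y) (φ (p i)) (φ (p j)) :=
    (eventually_all_finset _).2 (fun i hi => (eventually_all_finset _).2 fun j hj =>
      eventually_imp_distrib_left.2 fun hij => eventually_det3_pos
        (hsorted i j (Finset.mem_Icc.1 hi).1 hij (Finset.mem_Icc.1 hj).2) x)
      |>.exists (f := atTop)
  refine ⟨fun i => if i = 1 then (x, y) else φ (p i), ?_, ?_⟩
  · intro i j hi hij hj
    simp only [show j ≠ 1 by omega, if_false]
    split_ifs with hi1
    · exact hx j (Finset.mem_Icc.2 ⟨by omega, hj⟩)
    · exact hsorted i j (by omega) hij hj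
  · intro a b c ha hab hbc hc
    simp only [show b ≠ 1 by omega, show c ≠ 1 by omega, if_false]
    split_ifs with ha1
    · subst ha1
      exact iff_of_true (hy b (Finset.mem_Icc.2 ⟨by omega, by omega⟩) c (Finset.mem_Icc.2
        ⟨by omega, hc⟩) hbc) (hccw b c (by omega) hbc hc)
    · exact det3_projChart_pos_iff (hdepth a (by omega) (by omega))
        (hdepth b (by omega) (by omega)) (hdepth c (by omega) hc)

/-- If `p 1, …, p n` are distinct points in general position such that `p 1`
is extreme and `p 2, …, p n` appear counterclockwise around `p 1` (i.e. every
triple `(p 1, p a, p b)` with `2 ≤ a < b ≤ n` is positively oriented), then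
there are points with strictly increasing x-coordinates realizing exactly the
same triple orientations. -/
theorem exists_x_sorted_realization (n : ℕ) (hn : 1 ≤ n) (p : ℕ → ℝ × ℝ)
    (hinj : Set.InjOn p (Set.Icc 1 n))
    (hgp : InGenPos (p '' Set.Icc 1 n))
    (hextreme : p 1 ∈ Set.extremePoints ℝ (convexHull ℝ (p '' Set.Icc 1 n)))
    (hccw : ∀ a b : ℕ, 2 ≤ a → a < b → b ≤ n → det3 (p 1) (p a) (p b) > 0) :
    ∃ q : ℕ → ℝ × ℝ,
      (∀ i j : ℕ, 1 ≤ i → i < j → j ≤ n → (q i).1 < (q j).1) ∧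
      (∀ a b c : ℕ, 1 ≤ a → a < b → b < c → c ≤ n →
        (det3 (q a) (q b) (q c) > 0 ↔ det3 (p a) (p b) (p c) > 0)) :=
  exists_x_sorted_realization_general n p hccw
end

section
/- Every set of 5 points in the plane ℝ² in general position contains a 4-gon, i.e., four of the five points are in convex position. (Esther Klein's theorem, g(4) = 5.) -/
section LinearOrderedField

variable {𝕜 E : Type*} [Field 𝕜] [LinearOrder 𝕜] [IsStrictOrderedRing 𝕜] [AddCommGroup E]
  [Module 𝕜 E]

theorem eq_of_mem_convexHull_insert_of_lt (f : E →ₗ[𝕜] 𝕜) {c : 𝕜} {s : Set E} {x y : E}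
    (hs : ∀ z ∈ s, c < f z) (hy : f y = c) (hx : x ∈ convexHull 𝕜 (insert y s))
    (hfx : f x = c) : x = y := by
  rcases s.eq_empty_or_nonempty with rfl | hne
  · simpa using hx
  rw [convexHull_insert hne, convexJoin_singleton_left, Set.mem_iUnion₂] at hx
  obtain ⟨z, hz, a, b, ha, hb, hab, rfl⟩ := hx
  have hfz : c < f z := convexHull_min hs (convex_halfSpace_gt f.isLinear c) hz
  have hb0 : b * (f z - c) = 0 := by
    rw [map_add, map_smul, map_smul, hy, smul_eq_mul, smul_eq_mul] at hfx
    linear_combination hfx - c * hab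
  rw [mul_eq_zero, sub_eq_zero] at hb0
  rcases hb0 with hb0 | hb0
  · simp [hb0, show a = 1 by linarith]
  · exact absurd hb0 hfz.ne'

end LinearOrderedField

section Real

variable {E : Type*} [AddCommGroup E] [Module ℝ E] {s : Set E} {x : E}

theorem notMem_convexHull_sdiff_of_mem_extremePoints
    (hx : x ∈ (convexHull ℝ s).extremePoints ℝ) : x ∉ convexHull ℝ (s \ {x}) := fun h =>
  ((convex_convexHull ℝ s).mem_extremePoints_iff_mem_sdiff_convexHull_sdiff.1 hx).2
    (convexHull_mono (Set.sdiff_subset_sdiff_left (subset_convexHull ℝ s)) h)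

variable [TopologicalSpace E] [T2Space E] [IsTopologicalAddGroup E] [ContinuousSMul ℝ E]
  [LocallyConvexSpace ℝ E]

theorem Set.Finite.convexHull_extremePoints (hs : s.Finite) :
    convexHull ℝ ((convexHull ℝ s).extremePoints ℝ) = convexHull ℝ s := by
  have h := closure_convexHull_extremePoints (hs.isCompact_convexHull ℝ) (convex_convexHull ℝ s)
  rwa [((hs.subset extremePoints_convexHull_subset).isClosed_convexHull ℝ).closure_eq] at h

theorem mem_extremePoints_convexHull_of_notMem_convexHull_sdiff (hs : s.Finite) (hxs : x ∈ s)
    (hx : x ∉ convexHull ℝ (s \ {x})) : x ∈ (convexHull ℝ s).extremePoints ℝ := by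
  by_contra hext
  have hsub : (convexHull ℝ s).extremePoints ℝ ⊆ s \ {x} := fun y hy =>
    ⟨extremePoints_convexHull_subset hy, by rintro rfl; exact hext hy⟩
  have hx' := subset_convexHull ℝ s hxs
  rw [← hs.convexHull_extremePoints] at hx'
  exact hx (convexHull_mono hsub hx')

end Real

section Collinear

variable {k V P : Type*} [DivisionRing k] [AddCommGroup V] [Module k V] [AddTorsor V P]
  {s t : Set P}

theorem collinear_of_ncard_le_two (hs : s.Finite) (h : s.ncard ≤ 2) : Collinear k s := by
  obtain h | h | h : s.ncard = 0 ∨ s.ncard = 1 ∨ s.ncard = 2 := by omega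
  · rw [(Set.ncard_eq_zero hs).1 h]
    exact collinear_empty k P
  · obtain ⟨x, rfl⟩ := Set.ncard_eq_one.1 h
    exact collinear_singleton k x
  · obtain ⟨x, y, -, rfl⟩ := Set.ncard_eq_two.1 h
    exact collinear_pair k x y

theorem collinear_of_subset_affineSpan (hst : s ⊆ affineSpan k t) (ht : Collinear k t) :
    Collinear k s := by
  refine le_trans (Submodule.rank_mono ?_) ht
  calc vectorSpan k s ≤ vectorSpan k (affineSpan k t : Set P) := vectorSpan_mono k hst
    _ = vectorSpan k t := by rw [← AffineSubspace.direction_eq_vectorSpan, direction_affineSpan]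

end Collinear

theorem three_le_ncard_extremePoints {E : Type*} [NormedAddCommGroup E] [NormedSpace ℝ E]
    {s : Set E} (hs : s.Finite) (hcol : ¬ Collinear ℝ s) :
    3 ≤ ((convexHull ℝ s).extremePoints ℝ).ncard := by
  by_contra! h
  have hfin : ((convexHull ℝ s).extremePoints ℝ).Finite :=
    hs.subset extremePoints_convexHull_subset
  refine hcol (collinear_of_subset_affineSpan ?_ (collinear_of_ncard_le_two hfin (by omega)))
  calc s ⊆ convexHull ℝ s := subset_convexHull ℝ s
    _ = convexHull ℝ ((convexHull ℝ s).extremePoints ℝ) := hs.convexHull_extremePoints.symm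
    _ ⊆ affineSpan ℝ ((convexHull ℝ s).extremePoints ℝ) := convexHull_subset_affineSpan _

theorem exists_pair_same_side {α β : Type*} [LinearOrder β] {g : α → β} {c : β} {T : Set α}
    (hT : 3 ≤ T.ncard) (hg : ∀ t ∈ T, g t ≠ c) :
    ∃ p ∈ T, ∃ q ∈ T, p ≠ q ∧ (c < g p ∧ c < g q ∨ g p < c ∧ g q < c) := by
  obtain ⟨p, hp, q, hq, hpq, hside⟩ := Set.exists_ne_map_eq_of_ncard_lt_of_maps_to
    (s := T) (t := (Set.univ : Set Bool)) (f := fun t => decide (c < g t))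
    (by rw [Set.ncard_univ, Nat.card_eq_fintype_card, Fintype.card_bool]; omega)
    (fun _ _ => trivial)
  refine ⟨p, hp, q, hq, hpq, ?_⟩
  rcases (hg p hp).lt_or_gt with h1 | h1 <;> rcases (hg q hq).lt_or_gt with h2 | h2 <;>
    simp_all [h1.not_gt, h2.not_gt]

/-- The level sets of `wedge v` are the lines of direction `v`. -/
def wedge (v : ℝ × ℝ) : ℝ × ℝ →ₗ[ℝ] ℝ :=
  v.1 • LinearMap.snd ℝ ℝ ℝ - v.2 • LinearMap.fst ℝ ℝ ℝ

@[simp]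
theorem wedge_apply (v w : ℝ × ℝ) : wedge v w = v.1 * w.2 - v.2 * w.1 := by
  simp [wedge]

theorem collinear_of_wedge_eq {d e z : ℝ × ℝ} (hde : d ≠ e)
    (h : wedge (e - d) z = wedge (e - d) d) : Collinear ℝ ({d, e, z} : Set (ℝ × ℝ)) := by
  have hne : (e.1 - d.1) ^ 2 + (e.2 - d.2) ^ 2 ≠ 0 := by
    intro h0
    apply hde
    ext <;> nlinarith [sq_nonneg (e.1 - d.1), sq_nonneg (e.2 - d.2)]
  simp only [wedge_apply, Prod.fst_sub, Prod.snd_sub] at h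
  rw [collinear_iff_of_mem (p₀ := d) (by simp)]
  refine ⟨e - d, ?_⟩
  simp only [Set.mem_insert_iff, Set.mem_singleton_iff, vadd_eq_add]
  rintro p (rfl | rfl | rfl)
  · exact ⟨0, by simp⟩
  · exact ⟨1, by simp⟩
  · refine ⟨((e.1 - d.1) * (p.1 - d.1) + (e.2 - d.2) * (p.2 - d.2)) /
      ((e.1 - d.1) ^ 2 + (e.2 - d.2) ^ 2), ?_⟩
    ext <;> simp only [Prod.fst_add, Prod.snd_add, Prod.smul_fst, Prod.smul_snd,
      Prod.fst_sub, Prod.snd_sub, smul_eq_mul] <;> field_simp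
    · linear_combination -(e.2 - d.2) * h
    · linear_combination (e.1 - d.1) * h

theorem InGenPos.not_collinear {S : Set (ℝ × ℝ)} (hgp : InGenPos S) (h3 : 3 ≤ S.ncard) :
    ¬ Collinear ℝ S := by
  intro hcol
  obtain ⟨T, hTS, hT⟩ := Set.exists_subset_card_eq h3
  obtain ⟨a, b, c, hab, hac, hbc, rfl⟩ := Set.ncard_eq_three.1 hT
  exact hgp a (hTS (by simp)) b (hTS (by simp)) c (hTS (by simp)) hab hac hbc (hcol.subset hTS)

section Gon

variable {k : ℕ} {S P : Set (ℝ × ℝ)}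

theorem isGon_of_notMem_convexHull_sdiff (hPS : P ⊆ S) (hP : P.Finite) (hk : P.ncard = k)
    (h : ∀ x ∈ P, x ∉ convexHull ℝ (P \ {x})) : IsGon k S P :=
  ⟨hPS, hP, hk, fun x hx => mem_extremePoints_convexHull_of_notMem_convexHull_sdiff hP hx (h x hx)⟩

theorem isGon_of_subset_extremePoints (hS : S.Finite)
    (hP : P ⊆ (convexHull ℝ S).extremePoints ℝ) (hk : P.ncard = k) : IsGon k S P := by
  have hPS : P ⊆ S := hP.trans extremePoints_convexHull_subset
  refine isGon_of_notMem_convexHull_sdiff hPS (hS.subset hPS) hk fun x hx h => ?_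
  exact notMem_convexHull_sdiff_of_mem_extremePoints (hP hx)
    (convexHull_mono (Set.sdiff_subset_sdiff_left hPS) h)

theorem isGon_of_same_side {p q d e : ℝ × ℝ} (f : ℝ × ℝ →ₗ[ℝ] ℝ) {c : ℝ}
    (hp : p ∈ (convexHull ℝ S).extremePoints ℝ) (hq : q ∈ (convexHull ℝ S).extremePoints ℝ)
    (hdS : d ∈ S) (heS : e ∈ S) (hpq : p ≠ q) (hde : d ≠ e)
    (hd : f d = c) (he : f e = c) (hfp : c < f p) (hfq : c < f q) :
    IsGon 4 S {p, q, d, e} := by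
  have hpd : p ≠ d := by rintro rfl; linarith
  have hpe : p ≠ e := by rintro rfl; linarith
  have hqd : q ≠ d := by rintro rfl; linarith
  have hqe : q ≠ e := by rintro rfl; linarith
  have hPS : ({p, q, d, e} : Set (ℝ × ℝ)) ⊆ S := by
    simp only [Set.insert_subset_iff, Set.singleton_subset_iff]
    exact ⟨extremePoints_convexHull_subset hp, extremePoints_convexHull_subset hq, hdS, heS⟩
  have hline : ∀ x y, f x = c → f y = c → x ≠ y → x ∉ convexHull ℝ (insert y {p, q}) :=
    fun x y hx hy hxy hmem =>
      hxy (eq_of_mem_convexHull_insert_of_lt f (by simp [hfp, hfq]) hy hmem hx)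
  refine isGon_of_notMem_convexHull_sdiff hPS (Set.toFinite _) ?_ ?_
  · simp [Set.ncard_insert_of_notMem, hpq, hpd, hpe, hqd, hqe, hde]
  rintro x (rfl | rfl | rfl | rfl) hx
  · exact notMem_convexHull_sdiff_of_mem_extremePoints hp
      (convexHull_mono (Set.sdiff_subset_sdiff_left hPS) hx)
  · exact notMem_convexHull_sdiff_of_mem_extremePoints hq
      (convexHull_mono (Set.sdiff_subset_sdiff_left hPS) hx)
  · refine hline x e hd he hde (convexHull_mono ?_ hx)
    intro z hz
    simp only [Set.mem_sdiff, Set.mem_insert_iff, Set.mem_singleton_iff] at hz ⊢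
    tauto
  · refine hline x d he hd hde.symm (convexHull_mono ?_ hx)
    intro z hz
    simp only [Set.mem_sdiff, Set.mem_insert_iff, Set.mem_singleton_iff] at hz ⊢
    tauto

end Gon

/-- Esther Klein's theorem: every set of 5 points in the plane in general
position contains a 4-gon, i.e. four points in convex position. -/
theorem every_5_point_set_has_4gon (S : Set (ℝ × ℝ))
    (hfin : S.Finite) (hcard : S.ncard = 5) (hgp : InGenPos S) :
    ∃ P : Set (ℝ × ℝ), IsGon 4 S P := by
  set E := (convexHull ℝ S).extremePoints ℝ
  have hES : E ⊆ S := extremePoints_convexHull_subset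
  have hE3 : 3 ≤ E.ncard := three_le_ncard_extremePoints hfin (hgp.not_collinear (by omega))
  obtain h4 | h3 := le_or_gt 4 E.ncard
  · obtain ⟨P, hPE, hP⟩ := Set.exists_subset_card_eq h4
    exact ⟨P, isGon_of_subset_extremePoints hfin hPE hP⟩
  obtain ⟨d, e, hde, hSE⟩ := Set.ncard_eq_two.1 (show (S \ E).ncard = 2 by
    rw [Set.ncard_sdiff hES (hfin.subset hES)]; omega)
  have hd : d ∈ S \ E := by simp [hSE]
  have he : e ∈ S \ E := by simp [hSE]
  set f := wedge (e - d)
  have hfe : f e = f d := by simp only [f, wedge_apply, Prod.fst_sub, Prod.snd_sub]; ring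
  have hoff : ∀ z ∈ E, f z ≠ f d := fun z hz hfz =>
    hgp d hd.1 e he.1 z (hES hz) hde (fun h => hd.2 (h ▸ hz)) (fun h => he.2 (h ▸ hz))
      (collinear_of_wedge_eq hde hfz)
  obtain ⟨p, hp, q, hq, hpq, hside⟩ := exists_pair_same_side hE3 hoff
  refine ⟨{p, q, d, e}, ?_⟩
  rcases hside with ⟨hfp, hfq⟩ | ⟨hfp, hfq⟩
  · exact isGon_of_same_side f hp hq hd.1 he.1 hpq hde rfl hfe hfp hfq
  · exact isGon_of_same_side (-f) hp hq hd.1 he.1 hpq hde rfl (by simp [hfe])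
      (neg_lt_neg hfp) (neg_lt_neg hfq)
end

section
/- Let S be a finite set of points in ℝ² in general position, and let v₁, v₂, v₃, v₄, v₅, v₆ ∈ S be six points in convex position listed in the cyclic order in which they appear on the boundary of their convex hull (forming a convex hexagon). If no point of S lies in the interior of the triangle with vertices v₁, v₃, v₅, then S contains a 6-hole. -/
theorem det3_eq_s15 (a b c : ℝ × ℝ) :
    det3 a b c = (b.1 - a.1) * (c.2 - a.2) - (b.2 - a.2) * (c.1 - a.1) := by
  simp only [det3, Matrix.det_fin_three, Matrix.of_apply, Matrix.cons_val', Matrix.cons_val_zero,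
    Matrix.cons_val_fin_one, Matrix.cons_val_one, one_mul, Matrix.cons_val]
  ring

theorem det3_rotate (a b c : ℝ × ℝ) : det3 a b c = det3 b c a := by
  simp only [det3_eq_s15]; ring

theorem det3_swap (a b c : ℝ × ℝ) : det3 b a c = -det3 a b c := by
  simp only [det3_eq_s15]; ring

@[simp] theorem det3_self_left (a b : ℝ × ℝ) : det3 a a b = 0 := by
  simp only [det3_eq_s15]; ring

@[simp] theorem det3_self_right_s15 (a b : ℝ × ℝ) : det3 a b b = 0 := by
  simp only [det3_eq_s15]; ring

@[simp] theorem det3_self_outer (a b : ℝ × ℝ) : det3 a b a = 0 := by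
  simp only [det3_eq_s15]; ring

theorem det3_split (a b c x : ℝ × ℝ) :
    det3 a b c = det3 a b x + det3 b c x + det3 c a x := by
  simp only [det3_eq_s15]; ring

/-- Transitivity of the angular order around `a` inside the half-plane to the left of `ab`. -/
theorem det3_pos_trans {a b c d e : ℝ × ℝ} (hbc : 0 < det3 a b c) (hbd : 0 < det3 a b d)
    (hbe : 0 < det3 a b e) (hcd : 0 < det3 a c d) (hde : 0 < det3 a d e) : 0 < det3 a c e := by
  have plucker : det3 a c e * det3 a b d =
      det3 a c d * det3 a b e + det3 a b c * det3 a d e := by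
    simp only [det3_eq_s15]; ring
  have : 0 < det3 a c e * det3 a b d := by rw [plucker]; positivity
  exact pos_of_mul_pos_left this hbd.le

noncomputable def det3AffineMap (a b : ℝ × ℝ) : ℝ × ℝ →ᵃ[ℝ] ℝ where
  toFun := det3 a b
  linear := (b.1 - a.1) • LinearMap.snd ℝ ℝ ℝ - (b.2 - a.2) • LinearMap.fst ℝ ℝ ℝ
  map_vadd' p w := by
    simp only [vadd_eq_add, det3_eq_s15, Prod.snd_add, Prod.fst_add, LinearMap.sub_apply,
      LinearMap.smul_apply, LinearMap.snd_apply, smul_eq_mul, LinearMap.fst_apply]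
    ring

@[simp] theorem det3AffineMap_apply (a b x : ℝ × ℝ) : det3AffineMap a b x = det3 a b x := rfl

theorem continuous_det3 (a b : ℝ × ℝ) : Continuous (det3 a b) :=
  (det3AffineMap a b).continuous_of_finiteDimensional

theorem collinear_of_det3_eq_zero {a b c : ℝ × ℝ} (h : det3 a b c = 0) :
    Collinear ℝ ({a, b, c} : Set (ℝ × ℝ)) := by
  by_cases hab : a = b
  · subst hab
    simpa using collinear_pair ℝ a c
  have hN : 0 < (b.1 - a.1) ^ 2 + (b.2 - a.2) ^ 2 := by
    by_contra! hle
    exact hab (Prod.ext (by nlinarith) (by nlinarith))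
  set r := ((c.1 - a.1) * (b.1 - a.1) + (c.2 - a.2) * (b.2 - a.2)) /
    ((b.1 - a.1) ^ 2 + (b.2 - a.2) ^ 2)
  have hc : c = AffineMap.lineMap a b r := by
    rw [det3_eq_s15] at h
    ext
    · simp only [AffineMap.lineMap_apply_module', r, Prod.fst_add, Prod.smul_fst, Prod.fst_sub,
        smul_eq_mul]
      field_simp
      linear_combination -(b.2 - a.2) * h
    · simp only [AffineMap.lineMap_apply_module', r, Prod.snd_add, Prod.smul_snd, Prod.snd_sub,
        smul_eq_mul]
      field_simp
      linear_combination (b.1 - a.1) * h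
  have hperm : ({a, b, c} : Set (ℝ × ℝ)) = {c, a, b} := by
    ext; simp only [Set.mem_insert_iff, Set.mem_singleton_iff]; tauto
  rw [hperm, hc]
  exact collinear_insert_of_mem_affineSpan_pair (AffineMap.lineMap_mem_affineSpan_pair r a b)

section ExposedVertex

variable {E ι : Type*} [AddCommGroup E] [Module ℝ E]

theorem eq_of_mem_convexHull_of_le {s : Set E} {x q : E} (f : E →ᵃ[ℝ] ℝ) (hx : x ∈ s)
    (hlt : ∀ y ∈ s, y ≠ x → f x < f y) (hq : q ∈ convexHull ℝ s) (hfq : f q ≤ f x) : q = x := by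
  rcases (s \ {x}).eq_empty_or_nonempty with hrest | hrest
  · have hsub : s ⊆ {x} := Set.sdiff_eq_empty.1 hrest
    simpa using convexHull_mono hsub hq
  rw [← Set.insert_eq_of_mem hx, ← Set.insert_sdiff_singleton, convexHull_insert hrest,
    convexJoin_singleton_left] at hq
  obtain ⟨z, hz, a, b, ha, hb, hab, rfl⟩ := Set.mem_iUnion₂.1 hq
  have hxz : f x < f z := convexHull_min (fun y hy => hlt y hy.1 hy.2)
    ((convex_Ioi (f x)).affine_preimage f) hz
  rw [Convex.combo_affine_apply hab, smul_eq_mul, smul_eq_mul] at hfq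
  obtain rfl : a = 1 - b := by linarith
  obtain rfl : b = 0 := by nlinarith
  simp

def IsExposedVertex (w : ι → E) (i : ι) : Prop :=
  ∃ f : E →ᵃ[ℝ] ℝ, ∀ j, j ≠ i → f (w i) < f (w j)

theorem IsExposedVertex.comp_equiv {w : ι → E} {i : ι} (e : ι ≃ ι)
    (h : IsExposedVertex (w ∘ e) i) : IsExposedVertex w (e i) := by
  obtain ⟨f, hf⟩ := h
  refine ⟨f, fun j hj => ?_⟩
  simpa using hf (e.symm j) (by rintro rfl; simp at hj)

theorem IsExposedVertex.mem_extremePoints {w : ι → E} {i : ι} (h : IsExposedVertex w i) :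
    w i ∈ (convexHull ℝ (Set.range w)).extremePoints ℝ := by
  obtain ⟨f, hf⟩ := h
  have hlt : ∀ y ∈ Set.range w, y ≠ w i → f (w i) < f y := by
    rintro _ ⟨j, rfl⟩ hj
    exact hf j (fun hji => hj (hji ▸ rfl))
  have hle : ∀ y ∈ convexHull ℝ (Set.range w), f (w i) ≤ f y := fun y hy =>
    convexHull_min (t := f ⁻¹' Set.Ici (f (w i)))
      (fun y hy => (eq_or_ne y (w i)).elim (fun h => h ▸ le_refl (f (w i))) (hlt y hy · |>.le))
      ((convex_Ici (f (w i))).affine_preimage f) hy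
  refine mem_extremePoints_iff_left.2 ⟨subset_convexHull ℝ _ ⟨i, rfl⟩, ?_⟩
  rintro y hy z hz ⟨a, b, ha, hb, hab, hyz⟩
  refine eq_of_mem_convexHull_of_le f (Set.mem_range_self i) hlt hy ?_
  have hcomb := Convex.combo_affine_apply (f := f) (x := y) (y := z) hab
  rw [hyz, smul_eq_mul, smul_eq_mul] at hcomb
  obtain rfl : a = 1 - b := by linarith
  by_contra! hlt'
  nlinarith [mul_lt_mul_of_pos_left hlt' ha, mul_le_mul_of_nonneg_left (hle z hz) hb.le]

theorem injective_of_forall_isExposedVertex {w : ι → E} (h : ∀ i, IsExposedVertex w i) :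
    Function.Injective w := by
  intro i j hij
  by_contra hne
  obtain ⟨f, hf⟩ := h i
  exact (hf j (Ne.symm hne)).ne (congrArg f hij)

end ExposedVertex

theorem mem_convexHull_of_det3_nonneg {a b c x : ℝ × ℝ} (habc : 0 < det3 a b c)
    (hab : 0 ≤ det3 a b x) (hbc : 0 ≤ det3 b c x) (hca : 0 ≤ det3 c a x) :
    x ∈ convexHull ℝ ({a, b, c} : Set (ℝ × ℝ)) := by
  refine mem_convexHull_of_exists_fintype
    ![det3 b c x / det3 a b c, det3 c a x / det3 a b c, det3 a b x / det3 a b c] ![a, b, c]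
    (fun i => ?_) ?_ (fun i => by fin_cases i <;> simp) ?_
  · fin_cases i
    exacts [div_nonneg hbc habc.le, div_nonneg hca habc.le, div_nonneg hab habc.le]
  all_goals simp only [Fin.sum_univ_three, Matrix.cons_val_zero, Matrix.cons_val_one,
      Matrix.cons_val_two, Matrix.tail_cons, Matrix.head_cons]
  · field_simp
    linarith [det3_split a b c x]
  · ext <;> simp only [Prod.fst_add, Prod.snd_add, Prod.smul_fst, Prod.smul_snd, smul_eq_mul] <;>
      field_simp <;> simp only [det3_eq_s15] <;> ring

theorem mem_interior_convexHull_of_det3_pos {a b c x : ℝ × ℝ} (hab : 0 < det3 a b x)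
    (hbc : 0 < det3 b c x) (hca : 0 < det3 c a x) :
    x ∈ interior (convexHull ℝ ({a, b, c} : Set (ℝ × ℝ))) := by
  refine interior_maximal (t := {y | 0 < det3 a b y ∧ 0 < det3 b c y ∧ 0 < det3 c a y})
    (fun y ⟨hy₁, hy₂, hy₃⟩ => mem_convexHull_of_det3_nonneg ?_ hy₁.le hy₂.le hy₃.le) ?_
    ⟨hab, hbc, hca⟩
  · linarith [det3_split a b c y]
  · exact (isOpen_lt continuous_const (continuous_det3 a b)).inter
      ((isOpen_lt continuous_const (continuous_det3 b c)).inter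
        (isOpen_lt continuous_const (continuous_det3 c a)))

/-- The triangle `abc` without its side `ca`: what the chord `ca` cuts off a convex polygon at its
vertex `b`. -/
def InEar (a b c u : ℝ × ℝ) : Prop :=
  0 ≤ det3 a b u ∧ 0 ≤ det3 b c u ∧ 0 < det3 c a u

theorem inEar_self {a b c : ℝ × ℝ} (h : 0 < det3 a b c) : InEar a b c b :=
  ⟨(det3_self_right_s15 a b).ge, (det3_self_outer b c).ge, by rwa [det3_rotate]⟩

theorem InEar.det3_pos {a b c u p q : ℝ × ℝ} (hu : InEar a b c u) (ha : 0 ≤ det3 p q a)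
    (hb : 0 < det3 p q b) (hc : 0 ≤ det3 p q c) : 0 < det3 p q u := by
  obtain ⟨hab, hbc, hca⟩ := hu
  have expand : det3 a b c * det3 p q u =
      det3 b c u * det3 p q a + det3 c a u * det3 p q b + det3 a b u * det3 p q c := by
    simp only [det3_eq_s15]; ring
  have habc : 0 < det3 a b c := by linarith [det3_split a b c u]
  have : 0 < det3 a b c * det3 p q u := by rw [expand]; positivity
  exact pos_of_mul_pos_right this habc.le

theorem InEar.mem_convexHull {a b c u : ℝ × ℝ} (hu : InEar a b c u) :
    u ∈ convexHull ℝ ({a, b, c} : Set (ℝ × ℝ)) :=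
  mem_convexHull_of_det3_nonneg (by linarith [det3_split a b c u, hu.1, hu.2.1, hu.2.2])
    hu.1 hu.2.1 hu.2.2.le

theorem exists_inEar_forall_det3_le {S : Set (ℝ × ℝ)} (hS : S.Finite) {a b c : ℝ × ℝ}
    (hb : b ∈ S) (habc : 0 < det3 a b c) :
    ∃ u ∈ S, InEar a b c u ∧ ∀ q ∈ S, InEar a b c q → det3 c a u ≤ det3 c a q := by
  obtain ⟨u, ⟨huS, hu⟩, hmin⟩ := Set.exists_min_image {q ∈ S | InEar a b c q} (det3 c a)
    (hS.subset fun _ hq => hq.1) ⟨b, hb, inEar_self habc⟩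
  exact ⟨u, huS, hu, fun q hqS hq => hmin q ⟨hqS, hq⟩⟩

section Polygon

variable {n : ℕ} [NeZero n]

def IsCcwPolygon (v : Fin n → ℝ × ℝ) : Prop :=
  ∀ i j, j ≠ i → j ≠ i + 1 → 0 < det3 (v i) (v (i + 1)) (v j)

theorem IsCcwPolygon.det3_pos {v : Fin n → ℝ × ℝ} (hv : IsCcwPolygon v) (i j : Fin n)
    (hji : j ≠ i := by decide) (hji' : j ≠ i + 1 := by decide) :
    0 < det3 (v i) (v (i + 1)) (v j) :=
  hv i j hji hji'

theorem IsCcwPolygon.det3_nonneg {v : Fin n → ℝ × ℝ} (hv : IsCcwPolygon v) (i j : Fin n) :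
    0 ≤ det3 (v i) (v (i + 1)) (v j) := by
  by_cases hji : j = i
  · simp [hji]
  by_cases hji' : j = i + 1
  · simp [hji']
  exact (hv i j hji hji').le

theorem IsCcwPolygon.det3_nonneg_of_mem_convexHull {v : Fin n → ℝ × ℝ} (hv : IsCcwPolygon v)
    (i : Fin n) {q : ℝ × ℝ} (hq : q ∈ convexHull ℝ (Set.range v)) :
    0 ≤ det3 (v i) (v (i + 1)) q :=
  convexHull_min (t := det3AffineMap (v i) (v (i + 1)) ⁻¹' Set.Ici 0)
    (by rintro _ ⟨j, rfl⟩; exact hv.det3_nonneg i j) ((convex_Ici 0).affine_preimage _) hq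

theorem IsCcwPolygon.comp_add {v : Fin n → ℝ × ℝ} (hv : IsCcwPolygon v) (k : Fin n) :
    IsCcwPolygon fun i => v (i + k) := by
  intro i j hji hji'
  simpa only [add_right_comm i 1 k] using
    hv (i + k) (j + k) ((add_left_injective k).ne hji)
      (by rw [add_right_comm]; exact (add_left_injective k).ne hji')

theorem isCcwPolygon_comp_neg {v : Fin n → ℝ × ℝ}
    (hv : ∀ i j, j ≠ i → j ≠ i + 1 → det3 (v i) (v (i + 1)) (v j) < 0) :
    IsCcwPolygon fun i => v (-i) := by
  intro i j hji hji'
  have h := hv (-i - 1) (-j) (fun h => hji' (neg_injective (h.trans (by abel))))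
    (fun h => hji (neg_injective (h.trans (by abel))))
  rw [sub_add_cancel, ← neg_add', det3_swap] at h
  linarith

theorem IsCcwPolygon.det3_zero_two_four {v : Fin 6 → ℝ × ℝ} (hv : IsCcwPolygon v) :
    0 < det3 (v 0) (v 2) (v 4) :=
  det3_pos_trans (hv.det3_pos 0 2) (hv.det3_pos 0 3) (hv.det3_pos 0 4)
    (by rw [det3_rotate]; exact hv.det3_pos 2 0) (by rw [det3_rotate]; exact hv.det3_pos 3 0)

end Polygon

def earHexagon (v : Fin 6 → ℝ × ℝ) (u₀ u₁ u₂ : ℝ × ℝ) : Fin 6 → ℝ × ℝ :=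
  ![v 0, u₀, v 2, u₁, v 4, u₂]

theorem earHexagon_comp_add_two (v : Fin 6 → ℝ × ℝ) (u₀ u₁ u₂ : ℝ × ℝ) :
    earHexagon v u₀ u₁ u₂ ∘ (· + 2) = earHexagon (fun i => v (i + 2)) u₁ u₂ u₀ := by
  funext i; fin_cases i <;> rfl

theorem range_earHexagon_rotate (v : Fin 6 → ℝ × ℝ) (u₀ u₁ u₂ : ℝ × ℝ) :
    Set.range (earHexagon (fun i => v (i + 2)) u₁ u₂ u₀) = Set.range (earHexagon v u₀ u₁ u₂) := by
  rw [← earHexagon_comp_add_two]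
  exact (Equiv.addRight 2).surjective.range_comp _

structure IsEarHexagon (v : Fin 6 → ℝ × ℝ) (u₀ u₁ u₂ : ℝ × ℝ) : Prop where
  ccw : IsCcwPolygon v
  ear₀ : InEar (v 0) (v 1) (v 2) u₀
  ear₁ : InEar (v 2) (v 3) (v 4) u₁
  ear₂ : InEar (v 4) (v 5) (v 0) u₂

namespace IsEarHexagon

variable {v : Fin 6 → ℝ × ℝ} {u₀ u₁ u₂ : ℝ × ℝ} {i : Fin 6}

theorem rotate (h : IsEarHexagon v u₀ u₁ u₂) : IsEarHexagon (fun i => v (i + 2)) u₁ u₂ u₀ :=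
  ⟨h.ccw.comp_add 2, h.ear₁, h.ear₂, h.ear₀⟩

theorem isExposedVertex_zero (h : IsEarHexagon v u₀ u₁ u₂) :
    IsExposedVertex (earHexagon v u₀ u₁ u₂) 0 := by
  have hv := h.ccw
  refine ⟨det3AffineMap (v 5) (v 0) + det3AffineMap (v 0) (v 1), fun j hj => ?_⟩
  suffices 0 < det3 (v 5) (v 0) (earHexagon v u₀ u₁ u₂ j) +
      det3 (v 0) (v 1) (earHexagon v u₀ u₁ u₂ j) by
    simpa [earHexagon] using this
  fin_cases j
  · exact absurd rfl hj
  · exact add_pos_of_pos_of_nonneg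
      (h.ear₀.det3_pos (by simp) (hv.det3_pos 5 1) (hv.det3_pos 5 2).le) h.ear₀.1
  · exact add_pos (hv.det3_pos 5 2) (hv.det3_pos 0 2)
  · exact add_pos (h.ear₁.det3_pos (hv.det3_pos 5 2).le (hv.det3_pos 5 3) (hv.det3_pos 5 4).le)
      (h.ear₁.det3_pos (hv.det3_pos 0 2).le (hv.det3_pos 0 3) (hv.det3_pos 0 4).le)
  · exact add_pos (hv.det3_pos 5 4) (hv.det3_pos 0 4)
  · exact add_pos_of_nonneg_of_pos h.ear₂.2.1
      (h.ear₂.det3_pos (hv.det3_pos 0 4).le (hv.det3_pos 0 5) (by simp))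

theorem det3_nonneg_of_ne_one (h : IsEarHexagon v u₀ u₁ u₂) (j : Fin 6) (hj : j ≠ 1) :
    0 ≤ det3 (v 0) (v 2) (earHexagon v u₀ u₁ u₂ j) := by
  have hv := h.ccw
  have h024 := hv.det3_zero_two_four
  fin_cases j
  · exact (det3_self_outer _ _).ge
  · exact absurd rfl hj
  · exact (det3_self_right_s15 _ _).ge
  · exact (h.ear₁.det3_pos (by simp) (by rw [det3_rotate]; exact hv.det3_pos 2 0) h024.le).le
  · exact h024.le
  · refine (h.ear₂.det3_pos h024.le ?_ (by simp)).le
    rw [det3_rotate, det3_rotate]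
    exact hv.det3_pos 5 2

theorem det3_u₀_neg (h : IsEarHexagon v u₀ u₁ u₂) : det3 (v 0) (v 2) u₀ < 0 := by
  linarith [h.ear₀.2.2, det3_swap (v 0) (v 2) u₀]

theorem isExposedVertex_one (h : IsEarHexagon v u₀ u₁ u₂) :
    IsExposedVertex (earHexagon v u₀ u₁ u₂) 1 :=
  ⟨det3AffineMap (v 0) (v 2), fun j hj => h.det3_u₀_neg.trans_le (h.det3_nonneg_of_ne_one j hj)⟩

theorem isExposedVertex_add_two
    (h : IsExposedVertex (earHexagon (fun i => v (i + 2)) u₁ u₂ u₀) i) :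
    IsExposedVertex (earHexagon v u₀ u₁ u₂) (i + 2) := by
  rw [← earHexagon_comp_add_two] at h
  exact h.comp_equiv (Equiv.addRight 2)

theorem isExposedVertex (h : IsEarHexagon v u₀ u₁ u₂) (i : Fin 6) :
    IsExposedVertex (earHexagon v u₀ u₁ u₂) i := by
  fin_cases i
  · exact h.isExposedVertex_zero
  · exact h.isExposedVertex_one
  · exact isExposedVertex_add_two h.rotate.isExposedVertex_zero
  · exact isExposedVertex_add_two h.rotate.isExposedVertex_one
  · exact isExposedVertex_add_two (isExposedVertex_add_two h.rotate.rotate.isExposedVertex_zero)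
  · exact isExposedVertex_add_two (isExposedVertex_add_two h.rotate.rotate.isExposedVertex_one)

theorem convexHull_subset (h : IsEarHexagon v u₀ u₁ u₂) :
    convexHull ℝ (Set.range (earHexagon v u₀ u₁ u₂)) ⊆ convexHull ℝ (Set.range v) := by
  have hsub : ∀ i j k : Fin 6, ({v i, v j, v k} : Set (ℝ × ℝ)) ⊆ Set.range v := by
    simp [Set.insert_subset_iff]
  refine convexHull_min ?_ (convex_convexHull ℝ _)
  rintro _ ⟨i, rfl⟩
  fin_cases i
  · exact subset_convexHull ℝ _ (Set.mem_range_self 0)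
  · exact convexHull_mono (hsub 0 1 2) h.ear₀.mem_convexHull
  · exact subset_convexHull ℝ _ (Set.mem_range_self 2)
  · exact convexHull_mono (hsub 2 3 4) h.ear₁.mem_convexHull
  · exact subset_convexHull ℝ _ (Set.mem_range_self 4)
  · exact convexHull_mono (hsub 4 5 0) h.ear₂.mem_convexHull

theorem det3_pos_of_mem_convexHull {S : Set (ℝ × ℝ)} {q : ℝ × ℝ}
    (h : IsEarHexagon v u₀ u₁ u₂) (hgp : InGenPos S) (hv₀ : v 0 ∈ S) (hv₂ : v 2 ∈ S)
    (hu₀ : ∀ q ∈ S, InEar (v 0) (v 1) (v 2) q → det3 (v 2) (v 0) u₀ ≤ det3 (v 2) (v 0) q)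
    (hqS : q ∈ S) (hq : q ∈ convexHull ℝ (Set.range (earHexagon v u₀ u₁ u₂)))
    (hqH : q ∉ Set.range (earHexagon v u₀ u₁ u₂)) : 0 < det3 (v 0) (v 2) q := by
  rcases lt_trichotomy (det3 (v 0) (v 2) q) 0 with hneg | hzero | hpos
  · have hqv := h.convexHull_subset hq
    have hear : InEar (v 0) (v 1) (v 2) q :=
      ⟨h.ccw.det3_nonneg_of_mem_convexHull 0 hqv, h.ccw.det3_nonneg_of_mem_convexHull 1 hqv,
        by linarith [det3_swap (v 0) (v 2) q]⟩
    have hle : det3 (v 0) (v 2) q ≤ det3 (v 0) (v 2) u₀ := by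
      linarith [hu₀ q hqS hear, det3_swap (v 0) (v 2) q, det3_swap (v 0) (v 2) u₀]
    have hlt : ∀ y ∈ Set.range (earHexagon v u₀ u₁ u₂), y ≠ u₀ →
        det3 (v 0) (v 2) u₀ < det3 (v 0) (v 2) y := by
      rintro _ ⟨j, rfl⟩ hj
      exact h.det3_u₀_neg.trans_le (h.det3_nonneg_of_ne_one j fun hj1 => hj (hj1 ▸ rfl))
    have hqu := eq_of_mem_convexHull_of_le (det3AffineMap (v 0) (v 2)) (Set.mem_range_self 1)
      hlt hq hle
    exact absurd ⟨1, hqu.symm⟩ hqH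
  · refine absurd (collinear_of_det3_eq_zero hzero) (hgp _ hv₀ _ hv₂ q hqS ?_ ?_ ?_)
    · intro h02
      simpa [h02] using h.ccw.det3_zero_two_four
    · exact fun hq0 => hqH ⟨0, hq0⟩
    · exact fun hq2 => hqH ⟨2, hq2⟩
  · exact hpos

end IsEarHexagon

theorem exists_isHole_six_of_isCcwPolygon {S : Set (ℝ × ℝ)} (hS : S.Finite) (hgp : InGenPos S)
    {v : Fin 6 → ℝ × ℝ} (hv : IsCcwPolygon v) (hvS : ∀ i, v i ∈ S)
    (hempty : ∀ q ∈ S, q ∉ interior (convexHull ℝ ({v 0, v 2, v 4} : Set (ℝ × ℝ)))) :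
    ∃ P : Set (ℝ × ℝ), IsHole 6 S P := by
  obtain ⟨u₀, hu₀S, hu₀, hmin₀⟩ := exists_inEar_forall_det3_le hS (hvS 1) (hv.det3_pos 0 2)
  obtain ⟨u₁, hu₁S, hu₁, hmin₁⟩ := exists_inEar_forall_det3_le hS (hvS 3) (hv.det3_pos 2 4)
  obtain ⟨u₂, hu₂S, hu₂, hmin₂⟩ := exists_inEar_forall_det3_le hS (hvS 5) (hv.det3_pos 4 0)
  have h : IsEarHexagon v u₀ u₁ u₂ := ⟨hv, hu₀, hu₁, hu₂⟩
  refine ⟨Set.range (earHexagon v u₀ u₁ u₂), ⟨?_, Set.finite_range _, ?_, ?_⟩, ?_⟩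
  · rintro _ ⟨i, rfl⟩
    fin_cases i
    exacts [hvS 0, hu₀S, hvS 2, hu₁S, hvS 4, hu₂S]
  · rw [Set.ncard_range_of_injective (injective_of_forall_isExposedVertex h.isExposedVertex)]
    simp
  · rintro _ ⟨i, rfl⟩
    exact (h.isExposedVertex i).mem_extremePoints
  · intro q hqS hq
    by_contra hqH
    have h₀ := h.det3_pos_of_mem_convexHull hgp (hvS 0) (hvS 2) hmin₀ hqS hq hqH
    rw [← range_earHexagon_rotate] at hq hqH
    have h₁ := h.rotate.det3_pos_of_mem_convexHull hgp (hvS 2) (hvS 4) hmin₁ hqS hq hqH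
    rw [← range_earHexagon_rotate] at hq hqH
    have h₂ := h.rotate.rotate.det3_pos_of_mem_convexHull hgp (hvS 4) (hvS 0) hmin₂ hqS hq hqH
    exact hempty q hqS (mem_interior_convexHull_of_det3_pos h₀ h₁ h₂)

theorem hexagon_with_empty_odd_triangle_gives_6hole_general (S : Set (ℝ × ℝ))
    (hfin : S.Finite) (hgp : InGenPos S)
    (v : Fin 6 → ℝ × ℝ) (hmem : ∀ i, v i ∈ S)
    (hconv :
      (∀ i j : Fin 6, j ≠ i → j ≠ i + 1 → det3 (v i) (v (i + 1)) (v j) > 0) ∨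
      (∀ i j : Fin 6, j ≠ i → j ≠ i + 1 → det3 (v i) (v (i + 1)) (v j) < 0))
    (hempty : ∀ q ∈ S,
      q ∉ interior (convexHull ℝ ({v 0, v 2, v 4} : Set (ℝ × ℝ)))) :
    ∃ P : Set (ℝ × ℝ), IsHole 6 S P := by
  rcases hconv with hccw | hcw
  · exact exists_isHole_six_of_isCcwPolygon hfin hgp hccw hmem hempty
  · refine exists_isHole_six_of_isCcwPolygon hfin hgp (isCcwPolygon_comp_neg hcw)
      (fun i => hmem (-i)) ?_
    have htri : ({v (-0), v (-2), v (-4)} : Set (ℝ × ℝ)) = {v 0, v 2, v 4} := by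
      rw [show (-2 : Fin 6) = 4 by decide, show (-4 : Fin 6) = 2 by decide, neg_zero,
        Set.pair_comm]
    simpa only [htri] using hempty

/-- If `v 0, …, v 5` are six points of `S` forming a convex hexagon, listed in
the cyclic order in which they appear on the boundary of their convex hull
(equivalently, for every directed edge of the hexagon all remaining four points
lie strictly on one and the same side), and no point of `S` lies in the interior
of the triangle on the 1st, 3rd and 5th vertices, then `S` contains a 6-hole. -/
theorem hexagon_with_empty_odd_triangle_gives_6hole (S : Set (ℝ × ℝ))
    (hfin : S.Finite) (hgp : InGenPos S)
    (v : Fin 6 → ℝ × ℝ) (hmem : ∀ i, v i ∈ S) (hinj : Function.Injective v)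
    (hconv :
      (∀ i j : Fin 6, j ≠ i → j ≠ i + 1 → det3 (v i) (v (i + 1)) (v j) > 0) ∨
      (∀ i j : Fin 6, j ≠ i → j ≠ i + 1 → det3 (v i) (v (i + 1)) (v j) < 0))
    (hempty : ∀ q ∈ S,
      q ∉ interior (convexHull ℝ ({v 0, v 2, v 4} : Set (ℝ × ℝ)))) :
    ∃ P : Set (ℝ × ℝ), IsHole 6 S P :=
  hexagon_with_empty_odd_triangle_gives_6hole_general S hfin hgp v hmem hconv hempty
end

section
/- Let S = {p₁, …, pₙ} ⊆ ℝ² be a set of n points in general position whose x-coordinates are strictly increasing in the index, and such that p₂, …, pₙ appear in counterclockwise order around p₁, i.e., for all 2 ≤ a < b ≤ n the triple (p₁, p_a, p_b) is positively oriented. If for some index a with 2 ≤ a ≤ n−4 the three consecutive triples (p_a, p_{a+1}, p_{a+2}), (p_{a+1}, p_{a+2}, p_{a+3}) and (p_{a+2}, p_{a+3}, p_{a+4}) are all positively oriented, then the six points {p₁, p_a, p_{a+1}, p_{a+2}, p_{a+3}, p_{a+4}} form a 6-hole of S. -/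
/-!
Every triple of the six points `p 1, p a, …, p (a + 4)`, taken in this order, is positively
oriented: for triples through `p 1` this is the counterclockwise order around `p 1`, and for the
others it is the fact that an x-monotone chain of left turns turns left between any three of its
points. A sequence all of whose triples are positively oriented is a convex polygon, and each of
its vertices is cut off from the other points by the line through its two neighbours. The hexagon
is empty because every other point `p i` lies strictly to the right of the edge from `p 1` to
`p a` (if `i < a`) or of the edge from `p (a + 4)` to `p 1` (if `i > a + 4`).
-/

open Set

section Orientation

variable (x y z : ℝ × ℝ)

lemma det3_eq_s16 : det3 x y z = (y.1 - x.1) * (z.2 - x.2) - (z.1 - x.1) * (y.2 - x.2) := by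
  simp only [det3, Matrix.det_fin_three, Fin.isValue, Matrix.of_apply, Matrix.cons_val',
    Matrix.cons_val_zero, Matrix.cons_val_fin_one, Matrix.cons_val_one, one_mul, Matrix.cons_val]
  ring

lemma det3_rotate_s16 : det3 x y z = det3 y z x := by simp only [det3_eq_s16]; ring

lemma det3_swap_s16 : det3 x y z = -det3 x z y := by simp only [det3_eq_s16]; ring

lemma det3_self₁₃ : det3 x y x = 0 := by simp only [det3_eq_s16]; ring

lemma det3_self₂₃ : det3 x y y = 0 := by simp only [det3_eq_s16]; ring

lemma det3_self₁₂ : det3 x x y = 0 := by simp only [det3_eq_s16]; ring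

noncomputable def det3Affine : ℝ × ℝ →ᵃ[ℝ] ℝ :=
  ((y.1 - x.1) • LinearMap.snd ℝ ℝ ℝ - (y.2 - x.2) • LinearMap.fst ℝ ℝ ℝ).toAffineMap +
    AffineMap.const ℝ (ℝ × ℝ) (det3 x y 0)

@[simp] lemma det3Affine_apply : det3Affine x y z = det3 x y z := by
  simp only [det3Affine, det3_eq_s16, Prod.snd_zero, zero_sub, mul_neg, Prod.fst_zero, neg_mul,
    sub_neg_eq_add, AffineMap.coe_add, LinearMap.coe_toAffineMap, AffineMap.coe_const,
    Pi.add_apply, LinearMap.sub_apply, LinearMap.smul_apply, LinearMap.snd_apply, smul_eq_mul,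
    LinearMap.fst_apply, Function.const_apply]
  ring

end Orientation

section Extreme

variable {E : Type*} [AddCommGroup E] [Module ℝ E]

lemma convex_insert_preimage_Ioi (f : E →ᵃ[ℝ] ℝ) (x : E) :
    Convex ℝ (insert x (f ⁻¹' Ioi (f x))) := by
  intro y hy z hz a b ha hb hab
  simp only [mem_insert_iff, mem_preimage, mem_Ioi, Convex.combo_affine_apply hab,
    smul_eq_mul] at hy hz ⊢
  obtain rfl : a = 1 - b := by linarith
  rcases hy with rfl | hy <;> rcases hz with rfl | hz
  · exact Or.inl (Convex.combo_self hab _)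
  · rcases hb.eq_or_lt with rfl | hb
    · simp
    · exact Or.inr (by nlinarith [mul_pos hb (sub_pos.2 hz)])
  · rcases ha.eq_or_lt with ha | ha
    · simp [show b = 1 by linarith]
    · exact Or.inr (by nlinarith [mul_pos ha (sub_pos.2 hy)])
  · exact Or.inr (by nlinarith [mul_nonneg ha (sub_pos.2 hy).le, mul_nonneg hb (sub_pos.2 hz).le])

theorem mem_extremePoints_convexHull_of_affine_lt {s : Set E} {x : E} (f : E →ᵃ[ℝ] ℝ)
    (hx : x ∈ s) (hmin : ∀ y ∈ s, y ≠ x → f x < f y) :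
    x ∈ (convexHull ℝ s).extremePoints ℝ := by
  have hhull : convexHull ℝ s ⊆ insert x (f ⁻¹' Ioi (f x)) :=
    convexHull_min (fun y hy => (eq_or_ne y x).imp id (hmin y hy))
      (convex_insert_preimage_Ioi f x)
  refine ⟨subset_convexHull ℝ s hx, fun y hy z hz ⟨a, b, ha, hb, hab, hxyz⟩ => ?_⟩
  by_contra hyx
  have hfy : f x < f y := (hhull hy).resolve_left hyx
  have hfz : f x ≤ f z := (hhull hz).elim (fun h => h ▸ le_rfl) fun h => le_of_lt h
  have hfx : f x = a * f y + b * f z := by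
    rw [← hxyz, Convex.combo_affine_apply hab, smul_eq_mul, smul_eq_mul]
  obtain rfl : a = 1 - b := by linarith
  nlinarith [mul_pos ha (sub_pos.2 hfy)]

end Extreme

lemma det3_nonneg_of_mem_convexHull {s : Set (ℝ × ℝ)} {x y z : ℝ × ℝ}
    (hs : ∀ w ∈ s, 0 ≤ det3 x y w) (hz : z ∈ convexHull ℝ s) : 0 ≤ det3 x y z := by
  have hsub : convexHull ℝ s ⊆ det3Affine x y ⁻¹' Ici 0 :=
    convexHull_min (fun w hw => by simpa using hs w hw)
      ((convex_Ici 0).affine_preimage (det3Affine x y))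
  simpa using hsub hz

lemma det3_pos_of_left_turns {q₀ q₁ q₂ q₃ : ℝ × ℝ} (h₀₁ : q₀.1 < q₁.1) (h₁₂ : q₁.1 < q₂.1)
    (h₂₃ : q₂.1 < q₃.1) (h₀₁₂ : 0 < det3 q₀ q₁ q₂) (h₁₂₃ : 0 < det3 q₁ q₂ q₃) :
    0 < det3 q₀ q₁ q₃ ∧ 0 < det3 q₀ q₂ q₃ := by
  have e₁ : det3 q₀ q₁ q₃ * (q₂.1 - q₁.1)
      = det3 q₀ q₁ q₂ * (q₃.1 - q₁.1) + det3 q₁ q₂ q₃ * (q₁.1 - q₀.1) := by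
    simp only [det3_eq_s16]; ring
  have e₂ : det3 q₀ q₂ q₃ * (q₂.1 - q₁.1)
      = det3 q₀ q₁ q₂ * (q₃.1 - q₂.1) + det3 q₁ q₂ q₃ * (q₂.1 - q₀.1) := by
    simp only [det3_eq_s16]; ring
  have hpos : 0 < q₂.1 - q₁.1 := sub_pos.2 h₁₂
  constructor
  · refine pos_of_mul_pos_left (e₁ ▸ ?_) hpos.le
    exact add_pos (mul_pos h₀₁₂ (by linarith)) (mul_pos h₁₂₃ (by linarith))
  · refine pos_of_mul_pos_left (e₂ ▸ ?_) hpos.le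
    exact add_pos (mul_pos h₀₁₂ (by linarith)) (mul_pos h₁₂₃ (by linarith))

def IsConvexCCW (k : ℕ) (w : ℕ → ℝ × ℝ) : Prop :=
  ∀ i j l, i < j → j < l → l < k → 0 < det3 (w i) (w j) (w l)

theorem isConvexCCW_of_consecutive {q : ℕ → ℝ × ℝ} {k : ℕ}
    (hx : ∀ i j, i < j → j < k → (q i).1 < (q j).1)
    (hturn : ∀ i, i + 2 < k → 0 < det3 (q i) (q (i + 1)) (q (i + 2))) :
    IsConvexCCW k q := by
  intro i j l hij hjl hlk
  induction hd : l - i using Nat.strong_induction_on generalizing i j l with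
  | _ d ih =>
    rcases Nat.lt_or_ge (i + 1) j with hj | hj
    · exact (det3_pos_of_left_turns (hx _ _ (by omega) (by omega)) (hx _ _ hj (by omega))
        (hx _ _ hjl hlk) (ih _ (by omega) i (i + 1) j (by omega) hj (by omega) rfl)
        (ih _ (by omega) (i + 1) j l hj hjl hlk rfl)).2
    obtain rfl : j = i + 1 := by omega
    rcases Nat.lt_or_ge (i + 2) l with hl | hl
    · exact (det3_pos_of_left_turns (hx _ _ (by omega) (by omega)) (hx _ _ (by omega) (by omega))
        (hx _ _ (by omega) hlk)
        (ih _ (by omega) i (i + 1) (l - 1) (by omega) (by omega) (by omega) rfl)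
        (ih _ (by omega) (i + 1) (l - 1) l (by omega) (by omega) hlk rfl)).1
    obtain rfl : l = i + 2 := by omega
    exact hturn i hlk

def seqCons {α : Type*} (x : α) (f : ℕ → α) : ℕ → α
  | 0 => x
  | m + 1 => f m

namespace IsConvexCCW

variable {k : ℕ} {w : ℕ → ℝ × ℝ}

lemma cons (hw : IsConvexCCW k w) {c : ℝ × ℝ}
    (hc : ∀ j l, j < l → l < k → 0 < det3 c (w j) (w l)) :
    IsConvexCCW (k + 1) (seqCons c w) := by
  rintro (_ | i) (_ | j) (_ | l) hij hjl hl <;> try omega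
  · exact hc j l (by omega) (by omega)
  · exact hw i j l (by omega) (by omega) (by omega)

lemma det3_edge_nonneg_of_mem_convexHull (hw : IsConvexCCW k w) {i : ℕ} (hi : i + 1 < k)
    {z : ℝ × ℝ} (hz : z ∈ convexHull ℝ (w '' Iio k)) : 0 ≤ det3 (w i) (w (i + 1)) z := by
  refine det3_nonneg_of_mem_convexHull ?_ hz
  rintro _ ⟨j, hj, rfl⟩
  rw [mem_Iio] at hj
  rcases lt_trichotomy j i with hji | rfl | hij
  · rw [← det3_rotate_s16]; exact (hw j i (i + 1) hji (by omega) hi).le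
  · rw [det3_self₁₃]
  rcases (show j = i + 1 ∨ i + 1 < j by omega) with rfl | hij
  · rw [det3_self₂₃]
  · exact (hw i (i + 1) j (by omega) hij hj).le

lemma det3_closing_edge_nonneg_of_mem_convexHull (hw : IsConvexCCW k w) {z : ℝ × ℝ}
    (hz : z ∈ convexHull ℝ (w '' Iio k)) : 0 ≤ det3 (w (k - 1)) (w 0) z := by
  refine det3_nonneg_of_mem_convexHull ?_ hz
  rintro _ ⟨j, hj, rfl⟩
  rw [mem_Iio] at hj
  rcases (show j = 0 ∨ j = k - 1 ∨ 0 < j ∧ j < k - 1 by omega) with rfl | rfl | ⟨hj₀, hjk⟩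
  · rw [det3_self₂₃]
  · rw [det3_self₁₃]
  · rw [det3_rotate_s16]; exact (hw 0 j (k - 1) hj₀ hjk (by omega)).le

-- The separating line passes through the two cyclic neighbours of `w i`.
lemma exists_det3_neg_vertex_nonneg_rest (hw : IsConvexCCW k w) (hk : 3 ≤ k) {i : ℕ}
    (hi : i < k) :
    ∃ u v, det3 u v (w i) < 0 ∧ ∀ j < k, j ≠ i → 0 ≤ det3 u v (w j) := by
  rcases (show i = 0 ∨ i = k - 1 ∨ 0 < i ∧ i < k - 1 by omega) with rfl | rfl | ⟨hi₀, hik⟩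
  · refine ⟨w (k - 1), w 1, ?_, fun j hj hj₀ => ?_⟩
    · rw [← det3_rotate_s16, det3_swap_s16, neg_lt_zero]
      exact hw 0 1 (k - 1) one_pos (by omega) (by omega)
    rcases (show j = 1 ∨ j = k - 1 ∨ 1 < j ∧ j < k - 1 by omega) with rfl | rfl | ⟨hj₁, hjk⟩
    · rw [det3_self₂₃]
    · rw [det3_self₁₃]
    · rw [det3_rotate_s16]; exact (hw 1 j (k - 1) hj₁ hjk (by omega)).le
  · refine ⟨w (k - 2), w 0, ?_, fun j hj hjk => ?_⟩
    · rw [det3_rotate_s16, det3_swap_s16, neg_lt_zero]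
      exact hw 0 (k - 2) (k - 1) (by omega) (by omega) (by omega)
    rcases (show j = 0 ∨ j = k - 2 ∨ 0 < j ∧ j < k - 2 by omega) with rfl | rfl | ⟨hj₀, hjk⟩
    · rw [det3_self₂₃]
    · rw [det3_self₁₃]
    · rw [det3_rotate_s16]; exact (hw 0 j (k - 2) hj₀ hjk (by omega)).le
  · refine ⟨w (i - 1), w (i + 1), ?_, fun j hj hji => ?_⟩
    · rw [det3_swap_s16, neg_lt_zero]
      exact hw (i - 1) i (i + 1) (by omega) (by omega) (by omega)
    rcases (show j < i - 1 ∨ j = i - 1 ∨ j = i + 1 ∨ i + 1 < j by omega)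
      with hj' | rfl | rfl | hj'
    · rw [← det3_rotate_s16]; exact (hw j (i - 1) (i + 1) hj' (by omega) (by omega)).le
    · rw [det3_self₁₃]
    · rw [det3_self₂₃]
    · exact (hw (i - 1) (i + 1) j (by omega) hj' hj).le

theorem mem_extremePoints_convexHull (hw : IsConvexCCW k w) (hk : 3 ≤ k) {i : ℕ}
    (hi : i < k) :
    w i ∈ (convexHull ℝ (w '' Iio k)).extremePoints ℝ := by
  obtain ⟨u, v, hneg, hnonneg⟩ := hw.exists_det3_neg_vertex_nonneg_rest hk hi
  refine mem_extremePoints_convexHull_of_affine_lt (det3Affine u v) (mem_image_of_mem w hi) ?_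
  rintro _ ⟨j, hj, rfl⟩ hji
  rw [det3Affine_apply, det3Affine_apply]
  exact hneg.trans_le (hnonneg j hj (ne_of_apply_ne w hji))

lemma injOn (hw : IsConvexCCW k w) (hk : 3 ≤ k) : InjOn w (Iio k) := by
  intro i hi j hj hij
  by_contra hne
  wlog hlt : i < j generalizing i j
  · exact this hj hi hij.symm (Ne.symm hne) (by omega)
  rw [mem_Iio] at hi hj
  rcases (show 0 < i ∨ (i = 0 ∧ 1 < j) ∨ (i = 0 ∧ j = 1) by omega)
    with hi₀ | ⟨rfl, hj₁⟩ | ⟨rfl, rfl⟩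
  · have h := hw 0 i j hi₀ hlt hj
    rw [hij, det3_self₂₃] at h
    exact h.false
  · have h := hw 0 1 j one_pos hj₁ hj
    rw [hij, det3_self₁₃] at h
    exact h.false
  · have h := hw 0 1 2 one_pos one_lt_two hk
    rw [hij, det3_self₁₂] at h
    exact h.false

theorem isGon (hw : IsConvexCCW k w) (hk : 3 ≤ k) {S : Set (ℝ × ℝ)} (hS : w '' Iio k ⊆ S) :
    IsGon k S (w '' Iio k) := by
  refine ⟨hS, toFinite _, ?_, ?_⟩
  · rw [(hw.injOn hk).ncard_image, ncard_Iio_nat]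
  · rintro _ ⟨i, hi, rfl⟩
    exact hw.mem_extremePoints_convexHull hk hi


end IsConvexCCW

theorem three_consecutive_positive_triples_give_6hole_general (n : ℕ) (p : ℕ → ℝ × ℝ)
    (hx : ∀ i j : ℕ, 1 ≤ i → i < j → j ≤ n → (p i).1 < (p j).1)
    (hccw : ∀ a b : ℕ, 2 ≤ a → a < b → b ≤ n → det3 (p 1) (p a) (p b) > 0)
    (a : ℕ) (ha : 2 ≤ a) (han : a + 4 ≤ n)
    (h1 : det3 (p a) (p (a + 1)) (p (a + 2)) > 0)
    (h2 : det3 (p (a + 1)) (p (a + 2)) (p (a + 3)) > 0)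
    (h3 : det3 (p (a + 2)) (p (a + 3)) (p (a + 4)) > 0) :
    IsHole 6 (p '' Set.Icc 1 n)
      {p 1, p a, p (a + 1), p (a + 2), p (a + 3), p (a + 4)} := by
  set q : ℕ → ℝ × ℝ := fun m => p (a + m)
  set w := seqCons (p 1) q
  have hcup : IsConvexCCW 5 q := by
    refine isConvexCCW_of_consecutive (fun i j _ _ => hx _ _ (by omega) (by omega) (by omega)) ?_
    intro i hi
    rcases (show i = 0 ∨ i = 1 ∨ i = 2 by omega) with rfl | rfl | rfl
    exacts [h1, h2, h3]
  have hw : IsConvexCCW 6 w :=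
    hcup.cons fun j l _ _ => hccw (a + j) (a + l) (by omega) (by omega) (by omega)
  have hP : ({p 1, p a, p (a + 1), p (a + 2), p (a + 3), p (a + 4)} : Set (ℝ × ℝ)) =
      w '' Iio 6 := by
    rw [show Iio 6 = ({0, 1, 2, 3, 4, 5} : Set ℕ) by ext; simp; omega]
    simp [image_insert_eq, w, q, seqCons]
  rw [hP]
  refine ⟨hw.isGon (by norm_num) ?_, ?_⟩
  · rintro _ ⟨(_ | m), hm, rfl⟩ <;> simp only [mem_Iio] at hm
    exacts [⟨1, ⟨le_rfl, by omega⟩, rfl⟩, ⟨a + m, ⟨by omega, by omega⟩, rfl⟩]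
  rintro _ ⟨i, ⟨hi1, hin⟩, rfl⟩ hz
  rcases (show i = 1 ∨ (a ≤ i ∧ i ≤ a + 4) ∨ (2 ≤ i ∧ i < a) ∨ a + 4 < i by omega)
    with rfl | ⟨hai, hia⟩ | ⟨hi2, hia⟩ | hia
  · exact ⟨0, by norm_num, rfl⟩
  · exact ⟨i - a + 1, by simp only [mem_Iio]; omega,
      by simp [w, q, seqCons, Nat.add_sub_cancel' hai]⟩
  · have hedge : 0 ≤ det3 (p 1) (p a) (p i) :=
      hw.det3_edge_nonneg_of_mem_convexHull (i := 0) (by norm_num) hz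
    have hright := hccw i a hi2 hia (by omega)
    rw [det3_swap_s16] at hright
    linarith
  · have hedge : 0 ≤ det3 (p (a + 4)) (p 1) (p i) :=
      hw.det3_closing_edge_nonneg_of_mem_convexHull hz
    have hleft := hccw (a + 4) i (by omega) hia hin
    rw [det3_rotate_s16, det3_swap_s16] at hedge
    linarith

/-- For x-sorted points `p 1, …, p n` in general position, counterclockwise
around `p 1`: if three consecutive triples starting at index `a` (with
`2 ≤ a ≤ n - 4`) are all positively oriented, then
`{p 1, p a, p (a+1), p (a+2), p (a+3), p (a+4)}` is a 6-hole. -/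
theorem three_consecutive_positive_triples_give_6hole (n : ℕ) (p : ℕ → ℝ × ℝ)
    (hgp : InGenPos (p '' Set.Icc 1 n))
    (hx : ∀ i j : ℕ, 1 ≤ i → i < j → j ≤ n → (p i).1 < (p j).1)
    (hccw : ∀ a b : ℕ, 2 ≤ a → a < b → b ≤ n → det3 (p 1) (p a) (p b) > 0)
    (a : ℕ) (ha : 2 ≤ a) (han : a + 4 ≤ n)
    (h1 : det3 (p a) (p (a + 1)) (p (a + 2)) > 0)
    (h2 : det3 (p (a + 1)) (p (a + 2)) (p (a + 3)) > 0)
    (h3 : det3 (p (a + 2)) (p (a + 3)) (p (a + 4)) > 0) :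
    IsHole 6 (p '' Set.Icc 1 n)
      {p 1, p a, p (a + 1), p (a + 2), p (a + 3), p (a + 4)} :=
  three_consecutive_positive_triples_give_6hole_general n p hx hccw a ha han h1 h2 h3
end
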